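/- arXiv:0910.4826 — 3 statements merged into one kernel-verified Lean document; each statement's English description precedes it below -/
import Mathlib

section
/- For all natural numbers k, r, s with r + s ≥ k, the Gaussian binomial coefficients satisfy the q-Vandermonde identity: ∑_{i+j=k, i≤s, j≤r} binom(r,j)_q · binom(s,i)_q · q^{i(r−j)} = binom(r+s,k)_q. -/
/-- The Gaussian (q-)binomial coefficient, defined by the q-Pascal recursion. -/
def qbinom {R : Type*} [CommRing R] (q : R) : ℕ → ℕ → R
  | _, 0 => 1
  | 0, _ + 1 => 0
  | n + 1, k + 1 => qbinom q n k + q ^ (k + 1) * qbinom q n (k + 1)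

/-!
Induct on `r`. Splitting `[r+1, j]` by the q-Pascal rule `[r+1, j+1] = [r, j] + q^(j+1) [r, j+1]`
writes the sum for `(r + 1, s, k + 1)` as the sum for `(r, s, k)` plus `q^(k+1)` times the sum
for `(r, s, k + 1)`, which is the q-Pascal rule for `[r+s+1, k+1]`. Summing over the whole
antidiagonal is harmless, since `[r, j] = 0` for `j > r`.
-/

section

open Finset

variable {R : Type*} [CommRing R] (q : R)

@[simp]
lemma qbinom_zero_right (n : ℕ) : qbinom q n 0 = 1 := by
  cases n <;> rfl

@[simp]
lemma qbinom_zero_succ (k : ℕ) : qbinom q 0 (k + 1) = 0 := rfl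

lemma qbinom_succ_succ (n k : ℕ) :
    qbinom q (n + 1) (k + 1) = qbinom q n k + q ^ (k + 1) * qbinom q n (k + 1) := rfl

lemma qbinom_eq_zero_of_lt {n k : ℕ} (h : n < k) : qbinom q n k = 0 := by
  induction n generalizing k with
  | zero => obtain ⟨k, rfl⟩ := Nat.exists_eq_succ_of_ne_zero h.ne'; rfl
  | succ n ih =>
    obtain ⟨k, rfl⟩ := Nat.exists_eq_succ_of_ne_zero (Nat.ne_zero_of_lt h)
    rw [qbinom_succ_succ, ih (by omega), ih (by omega), mul_zero, add_zero]

/-- For `j > r` both sides vanish, so the truncated subtraction `r - j` does no harm. -/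
lemma qbinom_mul_pow_mul_succ_sub (r i j : ℕ) :
    qbinom q r j * q ^ (i * (r + 1 - j)) = q ^ i * (qbinom q r j * q ^ (i * (r - j))) := by
  rcases le_or_gt j r with hjr | hrj
  · rw [show i * (r + 1 - j) = i * (r - j) + i by rw [Nat.sub_add_comm hjr, Nat.mul_succ],
      pow_add]
    ring
  · simp [qbinom_eq_zero_of_lt q hrj]

theorem sum_antidiagonal_qbinom_mul_qbinom_mul_pow (r s k : ℕ) :
    ∑ ij ∈ antidiagonal k, qbinom q r ij.2 * qbinom q s ij.1 * q ^ (ij.1 * (r - ij.2)) =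
      qbinom q (r + s) k := by
  induction r generalizing k with
  | zero => cases k <;> simp [Nat.sum_antidiagonal_succ']
  | succ r ih =>
    cases k with
    | zero => simp
    | succ k =>
      have hterm : ∀ ij ∈ antidiagonal k,
          qbinom q (r + 1) (ij.2 + 1) * qbinom q s ij.1 * q ^ (ij.1 * (r + 1 - (ij.2 + 1))) =
            qbinom q r ij.2 * qbinom q s ij.1 * q ^ (ij.1 * (r - ij.2)) +
              q ^ (k + 1) *
                (qbinom q r (ij.2 + 1) * qbinom q s ij.1 * q ^ (ij.1 * (r - (ij.2 + 1)))) := by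
        rintro ⟨i, j⟩ hij
        obtain rfl : i + j = k := mem_antidiagonal.mp hij
        have h := qbinom_mul_pow_mul_succ_sub q r i (j + 1)
        rw [Nat.add_sub_add_right] at h ⊢
        rw [qbinom_succ_succ]
        linear_combination (q ^ (j + 1) * qbinom q s i) * h
      rw [Nat.add_right_comm, qbinom_succ_succ, ← ih k, ← ih (k + 1),
        Nat.sum_antidiagonal_succ', Nat.sum_antidiagonal_succ', sum_congr rfl hterm,
        sum_add_distrib, mul_add, mul_sum]
      simp only [qbinom_zero_right, Nat.sub_zero]
      ring

end

theorem qbinom_vandermonde_general {R : Type*} [CommRing R] (q : R) (k r s : ℕ) :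
    ∑ ij ∈ (Finset.HasAntidiagonal.antidiagonal k).filter (fun ij => ij.1 ≤ s ∧ ij.2 ≤ r),
        qbinom q r ij.2 * qbinom q s ij.1 * q ^ (ij.1 * (r - ij.2)) =
      qbinom q (r + s) k := by
  rw [← sum_antidiagonal_qbinom_mul_qbinom_mul_pow, Finset.sum_filter_of_ne]
  rintro ⟨i, j⟩ - hne
  constructor <;> by_contra! hlt <;> simp [qbinom_eq_zero_of_lt q hlt] at hne

/-- The q-Vandermonde identity: for `k ≤ r + s`,
`∑_{i+j=k, i≤s, j≤r} [r,j]_q [s,i]_q q^{i(r-j)} = [r+s, k]_q`. -/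
theorem qbinom_vandermonde {R : Type*} [CommRing R] (q : R) (k r s : ℕ)
    (h : k ≤ r + s) :
    ∑ ij ∈ (Finset.HasAntidiagonal.antidiagonal k).filter (fun ij => ij.1 ≤ s ∧ ij.2 ≤ r),
        qbinom q r ij.2 * qbinom q s ij.1 * q ^ (ij.1 * (r - ij.2)) =
      qbinom q (r + s) k :=
  qbinom_vandermonde_general q k r s
end

section
/- Let (K, δ*) be an iterative q-difference field whose field of constants is C. If x₁, …, x_r ∈ K are linearly independent over C, then the iterative Taylor series T_{x₁}, …, T_{x_r} ∈ K[[T]] (with T_x = ∑_k δ^{(k)}(x) T^k) are linearly independent over K. -/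
/-- An iterative `q`-difference ring structure on a commutative ring `R`,
relative to distinguished elements `q` and `t` of `R` (the images of the root
of unity `q ∈ C` and of the variable `t ∈ C(t)`).  It consists of a ring
automorphism `σ` (extending `f(t) ↦ f(qt)`) and a family of additive maps
`δ^{(k)}` satisfying `δ^{(0)} = id`, `δ^{(1)} = (σ − id)/((q−1)t)`, the twisted
Leibniz rule, and the iteration rule
`δ^{(i)} ∘ δ^{(j)} = [i+j, i]_q δ^{(i+j)}`. -/
structure IDqRing (R : Type*) [CommRing R] (q t : R) where
  σ : R ≃+* R
  δ : ℕ → R →+ R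
  δ_zero : ∀ a : R, δ 0 a = a
  δ_one : ∀ a : R, (q - 1) * t * δ 1 a = σ a - a
  σ_q : σ q = q
  σ_t : σ t = q * t
  δ_q : ∀ k, 0 < k → δ k q = 0
  δ_t : ∀ k, 1 < k → δ k t = 0
  leibniz : ∀ (k : ℕ) (a b : R),
    δ k (a * b) = ∑ ij ∈ Finset.HasAntidiagonal.antidiagonal k, (⇑σ)^[ij.1] (δ ij.2 a) * δ ij.1 b
  iter : ∀ (i j : ℕ) (a : R), δ i (δ j a) = qbinom q (i + j) i * δ (i + j) a

/-!
Among the nonzero `K`-relations `∑ a_i δ^{(k)}(x_i) = 0` (for all `k`) pick one of minimal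
support and normalize `a_{i₀} = 1`. If every `a_i` is a constant, the relation for `k = 0`
contradicts the independence of the `x_i` over the constants. Otherwise let `m > 0` be the least
order with some `δ^{(m)}(a_i) ≠ 0`. Applying `δ^{(m)}` to the relations, the twisted Leibniz rule
leaves only the terms `δ^{(m)}(a_i) σ^m(δ^{(k)}(x_i))`, because `δ^{(m)} ∘ δ^{(k)}` is a multiple of
`δ^{(m+k)}`. Hence `σ^{-m}(δ^{(m)}(a_i))` is a new nonzero relation, vanishing at `i₀` and wherever
`a_i` is constant: its support is strictly smaller.
-/

namespace IDqRing

variable {R : Type*} [CommRing R] {q t : R} (D : IDqRing R q t)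

theorem δ_mul_of_forall_lt_δ_eq_zero {m : ℕ} (hm : 0 < m) {a : R}
    (ha : ∀ j, 0 < j → j < m → D.δ j a = 0) (b : R) :
    D.δ m (b * a) = D.δ m b * a + (⇑D.σ)^[m] b * D.δ m a := by
  rw [D.leibniz, Finset.sum_eq_add_of_mem (0, m) (m, 0) (by simp) (by simp) (by simp [hm.ne])]
  · simp [D.δ_zero]
  · rintro ⟨i, j⟩ hij ⟨hi0, him⟩
    rw [Finset.HasAntidiagonal.mem_antidiagonal] at hij
    rw [ha i (by grind) (by grind), mul_zero]

theorem δ_apply_one {k : ℕ} (hk : 0 < k) : D.δ k 1 = 0 := by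
  induction k using Nat.strong_induction_on with
  | _ k ih =>
    have h := D.δ_mul_of_forall_lt_δ_eq_zero hk (fun j hj hjk => ih j hjk hj) 1
    simpa [Function.iterate_fixed (map_one D.σ)] using h

variable {ι : Type*} [Fintype ι] {x a : ι → R}

theorem sum_δ_mul_iterate_σ_eq_zero (hrel : ∀ k, ∑ i, a i * D.δ k (x i) = 0) {m : ℕ}
    (hm : 0 < m) (ha : ∀ j, 0 < j → j < m → ∀ i, D.δ j (a i) = 0) (k : ℕ) :
    ∑ i, D.δ m (a i) * (⇑D.σ)^[m] (D.δ k (x i)) = 0 := by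
  calc ∑ i, D.δ m (a i) * (⇑D.σ)^[m] (D.δ k (x i))
      = D.δ m (∑ i, D.δ k (x i) * a i)
          - qbinom q (m + k) m * ∑ i, a i * D.δ (m + k) (x i) := by
        rw [map_sum, Finset.mul_sum, ← Finset.sum_sub_distrib]
        refine Finset.sum_congr rfl fun i _ => ?_
        rw [D.δ_mul_of_forall_lt_δ_eq_zero hm (fun j hj hjm => ha j hj hjm i), D.iter]
        ring
    _ = 0 := by simp_rw [mul_comm (D.δ k _), hrel, map_zero, mul_zero, sub_zero]

theorem sum_σ_pow_symm_δ_mul_eq_zero (hrel : ∀ k, ∑ i, a i * D.δ k (x i) = 0) {m : ℕ}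
    (hm : 0 < m) (ha : ∀ j, 0 < j → j < m → ∀ i, D.δ j (a i) = 0) (k : ℕ) :
    ∑ i, (D.σ ^ m : RingAut R).symm (D.δ m (a i)) * D.δ k (x i) = 0 := by
  apply (D.σ ^ m : RingAut R).injective
  simp only [map_sum, map_mul, RingEquiv.apply_symm_apply, map_zero, RingAut.coe_pow]
  exact D.sum_δ_mul_iterate_σ_eq_zero hrel hm ha k

theorem exists_relation_of_not_constant (hrel : ∀ k, ∑ i, a i * D.δ k (x i) = 0)
    (h : ¬∀ i, ∀ m, 0 < m → D.δ m (a i) = 0) :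
    ∃ b : ι → R, (∀ k, ∑ i, b i * D.δ k (x i) = 0) ∧ (∃ i, b i ≠ 0) ∧
      ∀ i, (∀ m, 0 < m → D.δ m (a i) = 0) → b i = 0 := by
  classical
  have h' : ∃ m, 0 < m ∧ ∃ i, D.δ m (a i) ≠ 0 := by
    push Not at h
    obtain ⟨i, m, hm, hi⟩ := h
    exact ⟨m, hm, i, hi⟩
  obtain ⟨hm, j, hj⟩ := Nat.find_spec h'
  have hlow : ∀ l, 0 < l → l < Nat.find h' → ∀ i, D.δ l (a i) = 0 := fun l hl hlm i => by
    by_contra hne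
    exact Nat.find_min h' hlm ⟨hl, i, hne⟩
  exact ⟨fun i => (D.σ ^ Nat.find h' : RingAut R).symm (D.δ (Nat.find h') (a i)),
    D.sum_σ_pow_symm_δ_mul_eq_zero hrel hm hlow, ⟨j, by simpa using hj⟩,
    fun i hi => by simp [hi _ hm]⟩

end IDqRing

/-- In an iterative `q`-difference field `K` with field of constants `C`, elements
`x₁, …, x_r` that are linearly independent over the constants have iterative
Taylor series `T_{x_i} = ∑_k δ^{(k)}(x_i) T^k` that are linearly independent over
`K`. -/
theorem taylor_series_linearIndependent {K : Type*} [Field K] (q t : K)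
    (D : IDqRing K q t) (r : ℕ) (x : Fin r → K)
    (hx : ∀ c : Fin r → K, (∀ i, ∀ k, 0 < k → D.δ k (c i) = 0) →
      ∑ i, c i * x i = 0 → ∀ i, c i = 0) :
    ∀ a : Fin r → K, (∀ k : ℕ, ∑ i, a i * D.δ k (x i) = 0) → ∀ i, a i = 0 := by
  classical
  suffices h : ∀ s : Finset (Fin r), ∀ a : Fin r → K, (∀ i ∉ s, a i = 0) →
      (∀ k, ∑ i, a i * D.δ k (x i) = 0) → ∀ i, a i = 0 from
    fun a ha => h Finset.univ a (by simp) ha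
  intro s
  induction s using Finset.strongInduction with
  | H s ih =>
    intro a hs hrel
    by_contra! ⟨i₀, hi₀⟩
    set a' : Fin r → K := fun i => (a i₀)⁻¹ * a i
    have hrel' : ∀ k, ∑ i, a' i * D.δ k (x i) = 0 := by
      simp [a', mul_assoc, ← Finset.mul_sum, hrel]
    by_cases hconst : ∀ i, ∀ m, 0 < m → D.δ m (a' i) = 0
    · have := hx a' hconst (by simpa [D.δ_zero] using hrel' 0) i₀
      simp [a', hi₀] at this
    obtain ⟨b, hb, ⟨j, hj⟩, hb0⟩ := D.exists_relation_of_not_constant hrel' hconst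
    have hsupp : ∀ i ∉ s.erase i₀, b i = 0 := by
      intro i hi
      refine hb0 i fun m hm => ?_
      rcases eq_or_ne i i₀ with rfl | hne
      · simp [a', hi₀, D.δ_apply_one hm]
      · simp [a', hs i (by simpa [hne] using hi)]
    have hi₀s : i₀ ∈ s := by_contra fun h => hi₀ (hs i₀ h)
    exact hj (ih _ (Finset.erase_ssubset hi₀s) b hsupp hb j)
end

section
/- Let L be an iterative q-difference field with algebraically closed field of constants C(L), and let R be a simple iterative q-difference ring over L, finitely generated as an L-algebra. Then R is reduced, and the total ring of fractions E of R satisfies C(E) = C(L). -/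
/-! The nilradical of an iterative `q`-difference ring is `δ`-stable, so a simple one is reduced.
A constant of the total ring of fractions has a `δ`-stable ideal of denominators and hence lies
in `R`. If a constant `b ∈ R` were not in `C`, every `b - μ` with `μ ∈ C` would be a nonzero
constant, hence a unit; in a finitely generated `L`-algebra this forces `b` to be algebraic over
`L`, with a minimal polynomial over `C` that splits into such factors. -/

open Polynomial PrimeSpectrum Finset.HasAntidiagonal

namespace IDqRing

variable {R : Type*} [CommRing R] {q t : R} (D : IDqRing R q t)

def IsConst (a : R) : Prop := ∀ k, 0 < k → D.δ k a = 0

def IsSimple : Prop := ∀ I : Ideal R, (∀ k, ∀ a ∈ I, D.δ k a ∈ I) → I = ⊥ ∨ I = ⊤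

theorem isConst_one : D.IsConst 1 := by
  intro k
  induction k using Nat.strong_induction_on with
  | _ k ih =>
  intro hk
  have h := D.leibniz k 1 1
  rw [mul_one, Finset.sum_eq_add_of_mem (k, 0) (0, k) (by simp) (by simp) (by simp; omega)] at h
  · simpa [D.δ_zero, Function.iterate_fixed (map_one D.σ)] using h
  rintro ⟨i, j⟩ hij ⟨hk0, h0k⟩
  have hi : 0 < i ∧ i < k := by
    simp only [mem_antidiagonal, ne_eq, Prod.mk.injEq] at hij hk0 h0k; omega
  simp [ih i hi.2 hi.1]

variable {D} in
theorem δ_mul_of_isConst {v : R} (hv : D.IsConst v) (k : ℕ) (a : R) :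
    D.δ k (a * v) = D.δ k a * v := by
  rw [D.leibniz, Finset.sum_eq_single_of_mem (0, k) (by simp)]
  · simp [D.δ_zero]
  rintro ⟨i, j⟩ hij hne
  have hi : 0 < i := by simp only [mem_antidiagonal, ne_eq, Prod.mk.injEq] at hij hne; omega
  simp [hv i hi]

variable {D} in
theorem IsConst.pow {v : R} (hv : D.IsConst v) (n : ℕ) : D.IsConst (v ^ n) := by
  induction n with
  | zero => rw [pow_zero]; exact D.isConst_one
  | succ n ih => intro k hk; rw [pow_succ, δ_mul_of_isConst hv, ih k hk, zero_mul]

theorem iterate_σ_mem_nilradical {x : R} (hx : x ∈ nilradical R) (i : ℕ) :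
    (⇑D.σ)^[i] x ∈ nilradical R := by
  rw [← RingAut.coe_pow]
  exact (mem_nilradical.mp hx).map (D.σ ^ i)

theorem mk_δ_mul_eq_single {I : Ideal R} {k : ℕ} (a b : R) {p : ℕ × ℕ}
    (hp : p ∈ antidiagonal k)
    (h : ∀ ij ∈ antidiagonal k, ij ≠ p →
      (⇑D.σ)^[ij.1] (D.δ ij.2 a) * D.δ ij.1 b ∈ I) :
    Ideal.Quotient.mk I (D.δ k (a * b)) =
      Ideal.Quotient.mk I ((⇑D.σ)^[p.1] (D.δ p.2 a) * D.δ p.1 b) := by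
  rw [D.leibniz, map_sum, Finset.sum_eq_single_of_mem p hp
    fun ij hij hne => Ideal.Quotient.eq_zero_iff_mem.mpr (h ij hij hne)]

/-- Both sides are `δ_k (x * a)` modulo the nilradical, expanded by the two Leibniz rules for
`x * a` and `a * x`. -/
theorem mk_iterate_σ_mul_δ {k : ℕ} {a : R} (ha : ∀ j < k, D.δ j a ∈ nilradical R) (x : R) :
    Ideal.Quotient.mk (nilradical R) ((⇑D.σ)^[k] x * D.δ k a) =
      Ideal.Quotient.mk (nilradical R) (x * D.δ k a) := by
  have hxa := D.mk_δ_mul_eq_single (I := nilradical R) (k := k) x a (p := (k, 0)) (by simp) ?_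
  · have hax := D.mk_δ_mul_eq_single (I := nilradical R) (k := k) a x (p := (0, k)) (by simp) ?_
    · simp only [D.δ_zero, Function.iterate_zero_apply] at hxa hax
      rw [← hxa, mul_comm x, hax, mul_comm]
    rintro ⟨i, j⟩ hij hne
    have hj : j < k := by simp only [mem_antidiagonal, ne_eq, Prod.mk.injEq] at hij hne; omega
    exact Ideal.mul_mem_right _ _ (D.iterate_σ_mem_nilradical (ha j hj) i)
  rintro ⟨i, j⟩ hij hne
  have hi : i < k := by simp only [mem_antidiagonal, ne_eq, Prod.mk.injEq] at hij hne; omega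
  exact Ideal.mul_mem_left _ _ (ha i hi)

/-- Modulo nilpotents, `δ_{2k} (a * a) ≡ σ^k (δ_k a) * δ_k a ≡ (δ_k a) ^ 2` once every
`δ_j a` with `j < k` is nilpotent. -/
theorem δ_mem_nilradical_of_δ_mul_self_mem {a : R} (h : ∀ m, D.δ m (a * a) ∈ nilradical R)
    (k : ℕ) : D.δ k a ∈ nilradical R := by
  induction k using Nat.strong_induction_on with
  | _ k ih =>
  have hsq := D.mk_δ_mul_eq_single (I := nilradical R) (k := k + k) a a (p := (k, k)) (by simp) ?_
  · rw [D.mk_iterate_σ_mul_δ ih, Ideal.Quotient.eq_zero_iff_mem.mpr (h _), eq_comm,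
      Ideal.Quotient.eq_zero_iff_mem, mem_nilradical, ← pow_two] at hsq
    exact mem_nilradical.mpr hsq.of_pow
  rintro ⟨i, j⟩ hij hne
  simp only [mem_antidiagonal, ne_eq, Prod.mk.injEq] at hij hne
  rcases Nat.lt_or_ge j k with hj | hj
  · exact Ideal.mul_mem_right _ _ (D.iterate_σ_mem_nilradical (ih j hj) i)
  · exact Ideal.mul_mem_left _ _ (ih i (by omega))

/-- By induction on `n` with `a ^ 2 ^ n = 0`, squaring `a` at each step. -/
theorem δ_mem_nilradical {a : R} (ha : a ∈ nilradical R) (k : ℕ) :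
    D.δ k a ∈ nilradical R := by
  obtain ⟨n, hn⟩ := mem_nilradical.mp ha
  replace hn : a ^ 2 ^ n = 0 := pow_eq_zero_of_le (Nat.lt_two_pow_self).le hn
  clear ha
  induction n generalizing a k with
  | zero => simp_all
  | succ n ih =>
    refine D.δ_mem_nilradical_of_δ_mul_self_mem (fun m => ih (a := a * a) m ?_) k
    rw [← pow_two, ← pow_mul, ← pow_succ']
    exact hn

variable {D}

theorem IsSimple.isReduced (hD : D.IsSimple) : IsReduced R := by
  rcases hD _ fun k a ha => D.δ_mem_nilradical ha k with h | h
  · exact nilradical_eq_bot_iff.mp h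
  · obtain ⟨n, hn⟩ := mem_nilradical.mp (h ▸ Submodule.mem_top : (1 : R) ∈ nilradical R)
    have := subsingleton_of_zero_eq_one ((one_pow n).symm.trans hn).symm
    exact ⟨fun x _ => Subsingleton.elim x 0⟩

theorem IsSimple.eq_zero_or_isUnit_of_isConst (hD : D.IsSimple) {v : R} (hv : D.IsConst v) :
    v = 0 ∨ IsUnit v := by
  refine (hD (Ideal.span {v}) fun k a ha => ?_).imp Ideal.span_singleton_eq_bot.mp
    Ideal.span_singleton_eq_top.mp
  obtain ⟨r, rfl⟩ := Ideal.mem_span_singleton'.mp ha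
  rw [δ_mul_of_isConst hv]
  exact Ideal.mul_mem_left _ _ (Ideal.mem_span_singleton_self v)

theorem IsSimple.exists_algebraMap_eq_of_isLocalization (hD : D.IsSimple) {E : Type*}
    [CommRing E] [Algebra R E] (M : Submonoid R) [IsLocalization M E] {q' t' : E}
    {D_E : IDqRing E q' t'}
    (hE : ∀ k a, D_E.δ k (algebraMap R E a) = algebraMap R E (D.δ k a))
    {x : E} (hx : D_E.IsConst x) : ∃ b, algebraMap R E b = x := by
  set I := (1 : Submodule R E).colon {x}
  have hI : ∀ a, a ∈ I ↔ ∃ b, algebraMap R E b = algebraMap R E a * x := fun a => by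
    rw [Submodule.mem_colon_singleton, Submodule.mem_one, Algebra.smul_def]
  obtain ⟨⟨r, s⟩, hs⟩ := IsLocalization.surj M x
  have hsI : (s : R) ∈ I := (hI s).mpr ⟨r, hs.symm.trans (mul_comm _ _)⟩
  have hstab : ∀ k, ∀ a ∈ I, D.δ k a ∈ I := fun k a ha => by
    obtain ⟨b, hb⟩ := (hI a).mp ha
    exact (hI _).mpr ⟨D.δ k b, by rw [← hE, hb, δ_mul_of_isConst hx, hE]⟩
  rcases hD I hstab with hbot | htop
  · have h0 : IsUnit (0 : E) := by
      rw [← map_zero (algebraMap R E), ← Ideal.mem_bot.mp (hbot ▸ hsI)]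
      exact IsLocalization.map_units E s
    have := subsingleton_of_zero_eq_one (isUnit_zero_iff.mp h0)
    exact ⟨0, Subsingleton.elim _ _⟩
  · simpa using (hI 1).mp (htop ▸ Submodule.mem_top)

end IDqRing

/-- By Chevalley's theorem the image of `Spec R → Spec L[X]` is constructible; it contains the
generic point, hence a basic open `D(f)`, so `b - l` lies in a prime of `R` whenever
`f(l) ≠ 0`. -/
theorem Transcendental.finite_setOf_isUnit_sub_algebraMap {L R : Type*} [Field L] [CommRing R]
    [Algebra L R] [Algebra.FiniteType L R] {b : R} (hb : Transcendental L b) :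
    {l : L | IsUnit (b - algebraMap L R l)}.Finite := by
  set f : L[X] →+* R := (Polynomial.aeval b : L[X] →ₐ[L] R).toRingHom
  have hf : f.FinitePresentation := by
    refine RingHom.FinitePresentation.of_finiteType.mp
      (RingHom.FiniteType.of_comp_finiteType (f := C) ?_)
    have : f.comp C = algebraMap L R := by ext; simp [f]
    rw [this]
    exact RingHom.finiteType_algebraMap.mpr inferInstance
  obtain ⟨S, hS⟩ := exists_constructibleSetData_iff.mpr (isConstructible_range_comap hf)
  obtain ⟨Q, hQ, hQbot⟩ := Ideal.exists_comap_eq_of_mem_minimalPrimes_of_injective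
    (transcendental_iff_injective.mp hb) ⊥ (by simp [IsDomain.minimalPrimes_eq_singleton_bot])
  have hbot : (⟨⊥, Ideal.isPrime_bot⟩ : PrimeSpectrum L[X]) ∈ S.toSet :=
    hS ▸ ⟨⟨Q, hQ⟩, PrimeSpectrum.ext hQbot⟩
  simp only [ConstructibleSetData.toSet, Set.mem_iUnion] at hbot
  obtain ⟨B, hB, hgB, hfB⟩ := hbot
  have hf0 : B.f ≠ 0 := by simpa using hfB
  refine (finite_setOfPred_isRoot hf0).subset fun l hl => ?_
  by_contra hroot
  have hmem : (⟨_, (Ideal.span_singleton_prime (X_sub_C_ne_zero l)).mpr (prime_X_sub_C l)⟩ :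
      PrimeSpectrum L[X]) ∈ Set.range (comap f) := by
    rw [← hS]
    refine Set.mem_biUnion hB ⟨fun g ⟨i, hi⟩ => ?_, fun h => hroot ?_⟩
    · have hg : g = 0 := by simpa [hi] using hgB ⟨i, rfl⟩
      simp [hg]
    · simpa [Ideal.mem_span_singleton, dvd_iff_isRoot] using h
  obtain ⟨P, hP⟩ := hmem
  have : b - algebraMap L R l ∈ P.asIdeal := by
    have h1 : X - C l ∈ (comap f P).asIdeal := by rw [hP]; exact Ideal.mem_span_singleton_self _
    simpa [f] using h1
  exact P.isPrime.ne_top (Ideal.eq_top_of_isUnit_mem _ this hl)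

theorem Polynomial.Monic.exists_not_isUnit_sub_of_eval₂_eq_zero {C A : Type*} [Field C]
    [IsAlgClosed C] [CommRing A] [Nontrivial A] {P : C[X]} (hP : P.Monic) (f : C →+* A) {b : A}
    (h : P.eval₂ f b = 0) : ∃ μ, ¬IsUnit (b - f μ) := by
  rw [← prod_multiset_X_sub_C_of_monic_of_roots_card_eq hP IsAlgClosed.card_roots_eq_natDegree,
    eval₂_multiset_prod, Multiset.map_map] at h
  have := mt IsUnit.multisetProd_iff.mpr (h ▸ not_isUnit_zero)
  push Not at this
  obtain ⟨_, hμ, hnu⟩ := this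
  obtain ⟨μ, -, rfl⟩ := Multiset.mem_map.mp hμ
  exact ⟨μ, by simpa using hnu⟩

section Constants

variable {C L R : Type*} [Field L] [CommRing R] [Algebra L R] {q t : L} {D_L : IDqRing L q t}
  {q' t' : R} {D_R : IDqRing R q' t'}

/-- Applying `δ_k` to the minimal relation of `b` gives a relation among `1, b, …, b^(n-1)`. -/
theorem IDqRing.isConst_coeff_minpoly
    (hδ : ∀ k a, D_R.δ k (algebraMap L R a) = algebraMap L R (D_L.δ k a))
    {b : R} (hb : D_R.IsConst b) (n : ℕ) : D_L.IsConst ((minpoly L b).coeff n) := by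
  by_cases hint : IsIntegral L b
  swap
  · intro k _
    rw [minpoly.eq_zero hint, coeff_zero, map_zero]
  intro k hk
  set m := minpoly L b
  have hm := minpoly.monic hint
  rcases lt_trichotomy n m.natDegree with hn | rfl | hn
  · have hrel : ∑ i : Fin m.natDegree, D_L.δ k (m.coeff i) • b ^ (i : ℕ) = 0 := by
      have h := congrArg (D_R.δ k) (minpoly.aeval L b)
      conv_lhs at h => rw [hm.as_sum]
      simpa [Algebra.smul_def, Fin.sum_univ_eq_sum_range (fun i => algebraMap L R
        (D_L.δ k (m.coeff i)) * b ^ i), IDqRing.δ_mul_of_isConst (hb.pow _), hδ,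
        (hb.pow _) k hk] using h
    exact Fintype.linearIndependent_iff.mp (linearIndependent_pow b) _ hrel ⟨n, hn⟩
  · rw [hm.coeff_natDegree]
    exact D_L.isConst_one k hk
  · rw [coeff_eq_zero_of_natDegree_lt hn, map_zero]

variable [Field C] [IsAlgClosed C] [Algebra C L] [Algebra.FiniteType L R]

theorem IDqRing.IsSimple.exists_algebraMap_eq_of_isAlgClosed (hD : D_R.IsSimple)
    (hδ : ∀ k a, D_R.δ k (algebraMap L R a) = algebraMap L R (D_L.δ k a))
    (hconst : ∀ a : L, D_L.IsConst a ↔ a ∈ (algebraMap C L).range)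
    {b : R} (hb : D_R.IsConst b) : ∃ μ : C, algebraMap L R (algebraMap C L μ) = b := by
  by_contra hne
  push Not at hne
  have hunit (μ : C) : IsUnit (b - algebraMap L R (algebraMap C L μ)) := by
    refine (hD.eq_zero_or_isUnit_of_isConst fun k hk => ?_).resolve_left
      (sub_ne_zero.mpr (hne μ).symm)
    rw [map_sub, hb k hk, hδ, (hconst _).mpr ⟨μ, rfl⟩ k hk, map_zero, sub_zero]
  have hint : IsIntegral L b := by
    by_contra h
    refine Set.infinite_range_of_injective (algebraMap C L).injective
      ((Transcendental.finite_setOf_isUnit_sub_algebraMap fun ha => h ha.isIntegral).subset ?_)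
    rintro _ ⟨μ, rfl⟩
    exact hunit μ
  obtain ⟨P, hPmap, -, hPm⟩ := lifts_and_natDegree_eq_and_monic
    ((lifts_iff_coeff_lifts _).mpr fun n => (hconst _).mp (IDqRing.isConst_coeff_minpoly hδ hb n))
    (minpoly.monic hint)
  have : Nontrivial R := nontrivial_of_ne _ _ (hne 0)
  obtain ⟨μ, hμ⟩ := hPm.exists_not_isUnit_sub_of_eval₂_eq_zero
    ((algebraMap L R).comp (algebraMap C L)) (b := b)
    (by rw [← eval₂_map, hPmap, ← aeval_def, minpoly.aeval])
  exact hμ (hunit μ)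

end Constants

theorem simple_IDq_ring_reduced_and_constants_general {C L R : Type*} [Field C]
    [IsAlgClosed C] [Field L] [Algebra C L] [CommRing R] [Algebra L R]
    (q t : L) (D_L : IDqRing L q t)
    (D_R : IDqRing R (algebraMap L R q) (algebraMap L R t))
    (hδ : ∀ (k : ℕ) (a : L), D_R.δ k (algebraMap L R a) = algebraMap L R (D_L.δ k a))
    (hconst : ∀ a : L, (∀ k : ℕ, 0 < k → D_L.δ k a = 0) ↔ a ∈ (algebraMap C L).range)
    (hsimple : ∀ I : Ideal R, (∀ k : ℕ, ∀ a ∈ I, D_R.δ k a ∈ I) → I = ⊥ ∨ I = ⊤)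
    (hfg : Algebra.FiniteType L R) :
    IsReduced R ∧
    ∀ (D_E : IDqRing (FractionRing R)
        (algebraMap R (FractionRing R) (algebraMap L R q))
        (algebraMap R (FractionRing R) (algebraMap L R t))),
      (∀ (k : ℕ) (a : R),
        D_E.δ k (algebraMap R (FractionRing R) a) = algebraMap R (FractionRing R) (D_R.δ k a)) →
      ∀ x : FractionRing R, (∀ k : ℕ, 0 < k → D_E.δ k x = 0) →
        ∃ c : L, (∀ k : ℕ, 0 < k → D_L.δ k c = 0) ∧
          x = algebraMap R (FractionRing R) (algebraMap L R c) := by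
  refine ⟨IDqRing.IsSimple.isReduced hsimple, fun D_E hE x hx => ?_⟩
  obtain ⟨b, rfl⟩ := IDqRing.IsSimple.exists_algebraMap_eq_of_isLocalization hsimple
    (nonZeroDivisors R) hE hx
  have hb : D_R.IsConst b := fun k hk =>
    IsFractionRing.injective R (FractionRing R) (by rw [← hE, hx k hk, map_zero])
  obtain ⟨μ, rfl⟩ := IDqRing.IsSimple.exists_algebraMap_eq_of_isAlgClosed hsimple hδ hconst hb
  exact ⟨algebraMap C L μ, (hconst _).mpr ⟨μ, rfl⟩, rfl⟩

/-- Let `L` be an iterative `q`-difference field whose field of constants is an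
algebraically closed field `C`, and let `R` be a simple iterative `q`-difference
ring over `L` (no nonzero proper ideal stable under all `δ^{(k)}`), finitely
generated as an `L`-algebra.  Then `R` is reduced, and the constants of its
total ring of fractions `E = Loc(R)` (for any iterative `q`-difference structure
on `E` extending that of `R`) coincide with the constants `C(L)` of `L`. -/
theorem simple_IDq_ring_reduced_and_constants {C L R : Type*} [Field C]
    [IsAlgClosed C] [Field L] [Algebra C L] [CommRing R] [Algebra L R]
    (q t : L) (D_L : IDqRing L q t)
    (D_R : IDqRing R (algebraMap L R q) (algebraMap L R t))
    (hσ : ∀ a : L, D_R.σ (algebraMap L R a) = algebraMap L R (D_L.σ a))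
    (hδ : ∀ (k : ℕ) (a : L), D_R.δ k (algebraMap L R a) = algebraMap L R (D_L.δ k a))
    (hconst : ∀ a : L, (∀ k : ℕ, 0 < k → D_L.δ k a = 0) ↔ a ∈ (algebraMap C L).range)
    (hsimple : ∀ I : Ideal R, (∀ k : ℕ, ∀ a ∈ I, D_R.δ k a ∈ I) → I = ⊥ ∨ I = ⊤)
    (hfg : Algebra.FiniteType L R) :
    IsReduced R ∧
    ∀ (D_E : IDqRing (FractionRing R)
        (algebraMap R (FractionRing R) (algebraMap L R q))
        (algebraMap R (FractionRing R) (algebraMap L R t))),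
      (∀ (k : ℕ) (a : R),
        D_E.δ k (algebraMap R (FractionRing R) a) = algebraMap R (FractionRing R) (D_R.δ k a)) →
      ∀ x : FractionRing R, (∀ k : ℕ, 0 < k → D_E.δ k x = 0) →
        ∃ c : L, (∀ k : ℕ, 0 < k → D_L.δ k c = 0) ∧
          x = algebraMap R (FractionRing R) (algebraMap L R c) :=
  simple_IDq_ring_reduced_and_constants_general q t D_L D_R hδ hconst hsimple hfg
end
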